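/- If n₁ and n₂ are coprime squarefree positive integers for which the division fields K_{n₁} and K_{n₂} are linearly disjoint over K, then δ_{E/K}(n₁·n₂) = δ_{E/K}(n₁)·δ_{E/K}(n₂). -/

import Mathlib

open scoped NumberField

noncomputable section

/-- The short Weierstrass curve `y² = x³ + a·x + b` over `R`, in affine coordinates. -/
def shortCurve (R : Type) [CommRing R] (a b : R) : WeierstrassCurve.Affine R :=
  { a₁ := 0, a₂ := 0, a₃ := 0, a₄ := a, a₆ := b }

variable (K : Type) [Field K] [NumberField K]

/-- The discriminant `-16(4A³+27B²)` of `y² = x³ + Ax + B`. -/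
def discABS (A B : 𝓞 K) : 𝓞 K := -16 * (4 * A ^ 3 + 27 * B ^ 2)

open Classical in
/-- The `m`-division field of `y² = x³ + Ax + B` inside an algebraic closure of `K`. -/
def divisionField (A B : 𝓞 K) (m : ℕ) : IntermediateField K (AlgebraicClosure K) :=
  IntermediateField.adjoin K
    {z : AlgebraicClosure K |
      ∃ (x y : AlgebraicClosure K)
        (h : (shortCurve (AlgebraicClosure K)
            (algebraMap (𝓞 K) (AlgebraicClosure K) A)
            (algebraMap (𝓞 K) (AlgebraicClosure K) B)).Nonsingular x y),
        m • (WeierstrassCurve.Affine.Point.some x y h) = 0 ∧ (z = x ∨ z = y)}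

/-- The inclusion–exclusion sum `δ_{E/K}(n) = Σ_{m∣n} μ(m)/[K_m:K]`. -/
def deltaFin (A B : 𝓞 K) (n : ℕ) : ℝ :=
  ∑ m ∈ n.divisors,
    (ArithmeticFunction.moebius m : ℝ) / (Module.finrank K (divisionField K A B m) : ℝ)

/-- Two Galois extensions `L₁, L₂` of `K` inside an algebraic closure are linearly disjoint
over `K`: the natural map `Gal(L₁L₂/K) → Gal(L₁/K) × Gal(L₂/K)` is an isomorphism.
Since this map is always injective, and since every pair of `K`-automorphisms of `L₁` and
`L₂` extends to a pair of `K`-embeddings into the algebraic closure and conversely (the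
extensions being normal), this is equivalent to the following statement: every pair of
`K`-embeddings of `L₁` and `L₂` into the algebraic closure is induced by a single
`K`-automorphism of the algebraic closure. -/
def LinearlyDisjointPair (L₁ L₂ : IntermediateField K (AlgebraicClosure K)) : Prop :=
  Function.Surjective (fun σ : AlgebraicClosure K ≃ₐ[K] AlgebraicClosure K =>
    (σ.toAlgHom.comp L₁.val, σ.toAlgHom.comp L₂.val))

/-! Since `n₁` and `n₂` are coprime, every divisor of `n₁n₂` is uniquely a product `m₁m₂` with
`mᵢ ∣ nᵢ`, and `μ` is multiplicative, so it suffices that `[K_{m₁m₂}:K] = [K_{m₁}:K]·[K_{m₂}:K]`.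
By Bézout, an `m₁m₂`-torsion point is a combination of an `m₁`- and an `m₂`-torsion point, so
`K_{m₁m₂}` is the compositum of `K_{m₁}` and `K_{m₂}`. These are subfields of `K_{n₁}` and `K_{n₂}`,
so they are again linearly disjoint, and the degree of the compositum is the product of the
degrees: count the `K`-embeddings into `K̄`, which are pairs of embeddings of the two factors. -/

open WeierstrassCurve WeierstrassCurve.Affine IntermediateField Module
open scoped Classical

theorem Nat.Coprime.sum_divisors_mul_of_map_mul {R : Type*} [CommSemiring R] {f : ℕ → R}
    {m n : ℕ} (hmn : m.Coprime n)
    (hf : ∀ a ∈ m.divisors, ∀ b ∈ n.divisors, f (a * b) = f a * f b) :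
    ∑ d ∈ (m * n).divisors, f d = (∑ d ∈ m.divisors, f d) * ∑ d ∈ n.divisors, f d := by
  rw [Nat.divisors_mul, ← Finset.image_mul_product, Finset.sum_image hmn.mul_injOn_divisors,
    Finset.sum_mul_sum, Finset.sum_product]
  exact Finset.sum_congr rfl fun a ha => Finset.sum_congr rfl fun b hb => hf a ha b hb

theorem shortCurve_baseChange {R S : Type} [CommRing R] [CommRing S] [Algebra R S] (a b : R) :
    (shortCurve R a b).baseChange S = shortCurve S (algebraMap R S a) (algebraMap R S b) := by
  simp only [shortCurve, WeierstrassCurve.baseChange, WeierstrassCurve.map, map_zero]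

theorem WeierstrassCurve.Affine.Point.some_mem_range_map_val_iff {k F : Type*} [Field k]
    [Field F] [Algebra k F] (W : Affine k) (L : IntermediateField k F) {x y : F}
    (h : (W.baseChange F).toAffine.Nonsingular x y) :
    Point.some x y h ∈ (Point.map (W' := W) L.val).range ↔ x ∈ L ∧ y ∈ L := by
  constructor
  · rintro ⟨_ | ⟨x', y', h'⟩, hP⟩
    · cases hP
    · rw [Point.map_some, Point.some.injEq] at hP
      exact hP.1 ▸ hP.2 ▸ ⟨x'.2, y'.2⟩
  · rintro ⟨hx, hy⟩
    lift x to L using hx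
    lift y to L using hy
    exact ⟨Point.some _ _ ((W.baseChange_nonsingular L.val.injective x y).mp h), rfl⟩

section DivisionField

variable (k : Type) [Field k] (A B : 𝓞 k)

local notation "k̄" => AlgebraicClosure k

abbrev baseCurve : Affine k := shortCurve k (algebraMap (𝓞 k) k A) (algebraMap (𝓞 k) k B)

/-- `(Point.map L.val).range` is the group `E(L)` of points with coordinates in `L`. -/
theorem divisionField_le_iff (m : ℕ) (L : IntermediateField k k̄) :
    divisionField k A B m ≤ L ↔ ∀ P : ((baseCurve k A B).baseChange k̄).toAffine.Point,
      m • P = 0 → P ∈ (Point.map (W' := baseCurve k A B) L.val).range := by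
  rw [divisionField, IsScalarTower.algebraMap_apply (𝓞 k) k k̄ A,
    IsScalarTower.algebraMap_apply (𝓞 k) k k̄ B, ← shortCurve_baseChange, adjoin_le_iff]
  constructor
  · rintro hL (_ | ⟨x, y, h⟩) hP
    · exact zero_mem _
    · exact (Point.some_mem_range_map_val_iff _ L h).mpr
        ⟨hL ⟨x, y, h, hP, Or.inl rfl⟩, hL ⟨x, y, h, hP, Or.inr rfl⟩⟩
  · rintro hL z ⟨x, y, h, hP, rfl | rfl⟩
    exacts [((Point.some_mem_range_map_val_iff _ L h).mp (hL _ hP)).1,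
      ((Point.some_mem_range_map_val_iff _ L h).mp (hL _ hP)).2]

theorem divisionField_mono {m n : ℕ} (h : m ∣ n) :
    divisionField k A B m ≤ divisionField k A B n := by
  refine (divisionField_le_iff k A B m _).mpr fun P hP => ?_
  obtain ⟨c, rfl⟩ := h
  exact (divisionField_le_iff k A B _ _).mp le_rfl P (by rw [mul_comm, mul_smul, hP, nsmul_zero])

theorem divisionField_mul_of_coprime {m n : ℕ} (h : m.Coprime n) :
    divisionField k A B (m * n) = divisionField k A B m ⊔ divisionField k A B n := by
  refine le_antisymm ((divisionField_le_iff k A B _ _).mpr fun P hP => ?_)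
    (sup_le (divisionField_mono k A B (dvd_mul_right m n))
      (divisionField_mono k A B (dvd_mul_left n m)))
  have hmP : n • m • P = 0 := by rw [smul_smul, mul_comm, hP]
  have hnP : m • n • P = 0 := by rw [smul_smul, hP]
  obtain ⟨a, b, hab⟩ := Nat.isCoprime_iff_coprime.mpr h
  have hP_eq : P = b • (n • P) + a • (m • P) := by
    rw [← natCast_zsmul, ← natCast_zsmul, smul_smul, smul_smul, ← add_zsmul, add_comm, hab,
      one_zsmul]
  rw [hP_eq]
  exact add_mem
    (zsmul_mem ((divisionField_le_iff k A B m _).mp le_sup_left _ hnP) b)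
    (zsmul_mem ((divisionField_le_iff k A B n _).mp le_sup_right _ hmP) a)

end DivisionField

section LinearlyDisjointPair

variable {k : Type} [Field k]

local notation "k̄" => AlgebraicClosure k

theorem IntermediateField.exists_algEquiv_comp_val (L : IntermediateField k k̄) (g : L →ₐ[k] k̄) :
    ∃ σ : k̄ ≃ₐ[k] k̄, σ.toAlgHom.comp L.val = g :=
  ⟨AlgEquiv.ofBijective _ (AlgHom.normal_bijective k k̄ k̄ (g.liftNormal k̄)),
    AlgHom.ext (g.liftNormal_commutes k̄)⟩

theorem LinearlyDisjointPair.mono {L₁ L₂ M₁ M₂ : IntermediateField k k̄} (h₁ : L₁ ≤ M₁)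
    (h₂ : L₂ ≤ M₂) (h : LinearlyDisjointPair k M₁ M₂) : LinearlyDisjointPair k L₁ L₂ := by
  rintro ⟨g₁, g₂⟩
  obtain ⟨τ₁, rfl⟩ := L₁.exists_algEquiv_comp_val g₁
  obtain ⟨τ₂, rfl⟩ := L₂.exists_algEquiv_comp_val g₂
  obtain ⟨σ, hσ⟩ := h (τ₁.toAlgHom.comp M₁.val, τ₂.toAlgHom.comp M₂.val)
  simp only [Prod.mk.injEq] at hσ
  refine ⟨σ, Prod.ext (AlgHom.ext fun x => ?_) (AlgHom.ext fun x => ?_)⟩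
  exacts [DFunLike.congr_fun hσ.1 (inclusion h₁ x), DFunLike.congr_fun hσ.2 (inclusion h₂ x)]

theorem IntermediateField.finrank_eq_card_algHom [PerfectField k] (L : IntermediateField k k̄) :
    finrank k L = Nat.card (L →ₐ[k] k̄) := by
  rw [← Field.finSepDegree_eq_finrank_of_isSeparable, Field.finSepDegree_eq_of_isAlgClosed k L k̄]

theorem LinearlyDisjointPair.finrank_sup [PerfectField k] {L₁ L₂ : IntermediateField k k̄}
    (h : LinearlyDisjointPair k L₁ L₂) :
    finrank k ↥(L₁ ⊔ L₂) = finrank k L₁ * finrank k L₂ := by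
  let restrict (f : ↥(L₁ ⊔ L₂) →ₐ[k] k̄) : (L₁ →ₐ[k] k̄) × (L₂ →ₐ[k] k̄) :=
    (f.comp (inclusion le_sup_left), f.comp (inclusion le_sup_right))
  have injective : Function.Injective restrict := by
    intro f g hfg
    simp only [restrict, Prod.mk.injEq] at hfg
    refine algHom_ext_of_eq_adjoin k (sup_def L₁ L₂) fun x hx => ?_
    rcases hx with hx | hx
    exacts [DFunLike.congr_fun hfg.1 ⟨x, hx⟩, DFunLike.congr_fun hfg.2 ⟨x, hx⟩]
  have surjective : Function.Surjective restrict := by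
    intro g
    obtain ⟨σ, rfl⟩ := h g
    exact ⟨σ.toAlgHom.comp (L₁ ⊔ L₂).val, rfl⟩
  rw [finrank_eq_card_algHom, finrank_eq_card_algHom, finrank_eq_card_algHom, ← Nat.card_prod]
  exact Nat.card_congr (Equiv.ofBijective restrict ⟨injective, surjective⟩)

end LinearlyDisjointPair

theorem deltaFin_mul_of_linearlyDisjoint
    (A B : 𝓞 K)
    (n₁ n₂ : ℕ) (hcop : Nat.Coprime n₁ n₂)
    (hdisj : LinearlyDisjointPair K (divisionField K A B n₁) (divisionField K A B n₂)) :
    deltaFin K A B (n₁ * n₂) = deltaFin K A B n₁ * deltaFin K A B n₂ := by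
  unfold deltaFin
  refine hcop.sum_divisors_mul_of_map_mul fun m₁ hm₁ m₂ hm₂ => ?_
  have hm : m₁.Coprime m₂ :=
    (hcop.coprime_dvd_left (Nat.dvd_of_mem_divisors hm₁)).coprime_dvd_right
      (Nat.dvd_of_mem_divisors hm₂)
  have hdeg : finrank K (divisionField K A B (m₁ * m₂)) =
      finrank K (divisionField K A B m₁) * finrank K (divisionField K A B m₂) := by
    rw [divisionField_mul_of_coprime K A B hm]
    exact (hdisj.mono (divisionField_mono K A B (Nat.dvd_of_mem_divisors hm₁))
      (divisionField_mono K A B (Nat.dvd_of_mem_divisors hm₂))).finrank_sup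
  rw [ArithmeticFunction.isMultiplicative_moebius.map_mul_of_coprime hm, hdeg]
  push_cast
  rw [div_mul_div_comm]

end
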